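/- arXiv:1310.2841 — 10 statements merged into one kernel-verified Lean document; each statement's English description precedes it below -/
import Mathlib

section
/- If f : D'^r → ℝ is a k-submodular function (D' = {0,1,...,k}, with the operations ⊓, ⊔ defined by: ⊓ and ⊔ are symmetric and idempotent, 0 ⊓ x = 0, 0 ⊔ x = x, and x ⊓ y = x ⊔ y = 0 for distinct nonzero x, y, applied coordinatewise), X* minimizes f over D'^r, and X minimizes f over the integral points {1,...,k}^r, then f(X) ≥ f((X ⊔ X*) ⊔ X*), where (X ⊔ X*) ⊔ X* is the point that agrees with X* at every coordinate where X* is nonzero and agrees with X elsewhere. In particular there is an integral minimizer agreeing with X* on all coordinates where X* is nonzero (persistence of k-submodular relaxations). -/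
/-- The k-submodular meet on `{0,...,k}`: commutative, idempotent,
`0 ⊓ x = 0`, and `x ⊓ y = 0` for distinct nonzero `x, y`. -/
def dinf (x y : ℕ) : ℕ := if x = y then x else 0

/-- The k-submodular join on `{0,...,k}`: commutative, idempotent,
`0 ⊔ x = x`, and `x ⊔ y = 0` for distinct nonzero `x, y`. -/
def dsup (x y : ℕ) : ℕ :=
  if x = y then x else if x = 0 then y else if y = 0 then x else 0

lemma dinf_le {k x y : ℕ} (hx : x ≤ k) (hy : y ≤ k) : dinf x y ≤ k := by
  unfold dinf; split_ifs <;> omega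

lemma dsup_le {k x y : ℕ} (hx : x ≤ k) (hy : y ≤ k) : dsup x y ≤ k := by
  unfold dsup; split_ifs <;> omega

theorem stmt0 (k r : ℕ) (hk : 1 ≤ k) (f : (Fin r → ℕ) → ℝ)
    (hsub : ∀ X Y : Fin r → ℕ, (∀ i, X i ≤ k) → (∀ i, Y i ≤ k) →
      f X + f Y ≥ f (fun i => dinf (X i) (Y i)) + f (fun i => dsup (X i) (Y i)))
    (Xs : Fin r → ℕ) (hXs : ∀ i, Xs i ≤ k)
    (hXsmin : ∀ Y : Fin r → ℕ, (∀ i, Y i ≤ k) → f Xs ≤ f Y)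
    (X : Fin r → ℕ) (hX : ∀ i, 1 ≤ X i ∧ X i ≤ k)
    (hXmin : ∀ Y : Fin r → ℕ, (∀ i, 1 ≤ Y i ∧ Y i ≤ k) → f X ≤ f Y) :
    f X ≥ f (fun i => dsup (dsup (X i) (Xs i)) (Xs i)) ∧
    ∃ Y : Fin r → ℕ, (∀ i, 1 ≤ Y i ∧ Y i ≤ k) ∧
      (∀ Z : Fin r → ℕ, (∀ i, 1 ≤ Z i ∧ Z i ≤ k) → f Y ≤ f Z) ∧
      (∀ i, Xs i ≠ 0 → Y i = Xs i) := by
  have hXk : ∀ i, X i ≤ k := fun i => (hX i).2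
  set B : Fin r → ℕ := fun i => dsup (X i) (Xs i) with hB
  set Y : Fin r → ℕ := fun i => dsup (B i) (Xs i) with hYdef
  have hYeq : ∀ i, Y i = if Xs i = 0 then X i else Xs i := by
    intro i
    have h1 := (hX i).1
    simp only [hYdef, hB, dsup]
    split_ifs <;> omega
  have hBk : ∀ i, B i ≤ k := fun i => dsup_le (hXk i) (hXs i)
  have hYk : ∀ i, 1 ≤ Y i ∧ Y i ≤ k := by
    intro i
    rw [hYeq i]
    split_ifs with h
    · exact hX i
    · exact ⟨Nat.one_le_iff_ne_zero.mpr h, hXs i⟩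
  have h1 := hsub X Xs hXk hXs
  have h2 := hsub B Xs hBk hXs
  have hA := hXsmin (fun i => dinf (X i) (Xs i)) (fun i => dinf_le (hXk i) (hXs i))
  have hC := hXsmin (fun i => dinf (B i) (Xs i)) (fun i => dinf_le (hBk i) (hXs i))
  have hmain : f X ≥ f Y := by
    have : f Y = f (fun i => dsup (B i) (Xs i)) := rfl
    linarith
  exact ⟨hmain, Y, hYk, fun Z hZ => le_trans hmain (hXmin Z hZ),
    fun i h => by rw [hYeq i]; simp [h]⟩
end

section
/- Let f : 2^V → ℝ be a submodular set function on a finite set V and let f̂ denote its Lovász extension restricted to {0, 1/2, 1}^V, i.e. for A = A₁ + (1/2)·A_{1/2} with A₁, A_{1/2} ⊆ V disjoint, define f̂(A) = (f(A₁) + f(A₁ ∪ A_{1/2}))/2. Then 2f̂ is bisubmodular: for all A, B ∈ {0,1/2,1}^V, f̂(A) + f̂(B) ≥ f̂(A ⊓ B) + f̂(A ⊔ B), where (x ⊔ y, x ⊓ y) = (⌈x+y⌉/2, ⌊x+y⌋/2) coordinatewise (⊔ rounds away from 1/2, ⊓ rounds towards 1/2). -/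
/-- Bisubmodular meet on `{0, 1/2, 1}`: of `⌈x+y⌉/2` and `⌊x+y⌋/2`, the
value closer to `1/2`. -/
def hinf (x y : ℚ) : ℚ :=
  if |(⌈x + y⌉ : ℚ) / 2 - 1 / 2| ≤ |(⌊x + y⌋ : ℚ) / 2 - 1 / 2| then
    (⌈x + y⌉ : ℚ) / 2
  else
    (⌊x + y⌋ : ℚ) / 2

/-- Bisubmodular join on `{0, 1/2, 1}`: of `⌈x+y⌉/2` and `⌊x+y⌋/2`, the
value further from `1/2`. -/
def hsup (x y : ℚ) : ℚ :=
  if |(⌈x + y⌉ : ℚ) / 2 - 1 / 2| ≤ |(⌊x + y⌋ : ℚ) / 2 - 1 / 2| then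
    (⌊x + y⌋ : ℚ) / 2
  else
    (⌈x + y⌉ : ℚ) / 2

lemma ceil_half : ⌈(1/2 : ℚ)⌉ = 1 := by norm_num [Int.ceil_eq_iff]
lemma ceil_3half : ⌈(3/2 : ℚ)⌉ = 2 := by norm_num [Int.ceil_eq_iff]
lemma floor_half : ⌊(1/2 : ℚ)⌋ = 0 := by norm_num [Int.floor_eq_iff]
lemma floor_3half : ⌊(3/2 : ℚ)⌋ = 1 := by norm_num [Int.floor_eq_iff]

lemma key (x y : ℚ) (hx : x = 0 ∨ x = 1/2 ∨ x = 1) (hy : y = 0 ∨ y = 1/2 ∨ y = 1) :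
    (hinf x y = 1 ↔ x = 1 ∧ y = 1) ∧ (hinf x y ≠ 0 ↔ x ≠ 0 ∨ y ≠ 0) ∧
    (hsup x y = 1 ↔ (x = 1 ∧ y ≠ 0) ∨ (x ≠ 0 ∧ y = 1)) ∧
    (hsup x y ≠ 0 ↔ (x ≠ 0 ∧ y ≠ 0) ∨ x = 1 ∨ y = 1) := by
  rcases hx with rfl|rfl|rfl <;> rcases hy with rfl|rfl|rfl <;>
    norm_num [hinf, hsup, ceil_half, ceil_3half, floor_half, floor_3half]

theorem stmt2 {V : Type*} [Fintype V] [DecidableEq V] (f : Finset V → ℝ)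
    (hsub : ∀ A B : Finset V, f A + f B ≥ f (A ∩ B) + f (A ∪ B))
    (hatf : (V → ℚ) → ℝ)
    (hhat : ∀ A : V → ℚ, hatf A =
      (f (Finset.univ.filter (fun v => A v = 1)) +
        f (Finset.univ.filter (fun v => A v ≠ 0))) / 2)
    (A B : V → ℚ)
    (hA : ∀ v, A v = 0 ∨ A v = 1 / 2 ∨ A v = 1)
    (hB : ∀ v, B v = 0 ∨ B v = 1 / 2 ∨ B v = 1) :
    hatf A + hatf B ≥
      hatf (fun v => hinf (A v) (B v)) + hatf (fun v => hsup (A v) (B v)) := by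
  set PA := Finset.univ.filter (fun v => A v = 1) with hPA
  set SA := Finset.univ.filter (fun v => A v ≠ 0) with hSA
  set PB := Finset.univ.filter (fun v => B v = 1) with hPB
  set SB := Finset.univ.filter (fun v => B v ≠ 0) with hSB
  have hPSA : PA ⊆ SA := by
    intro v hv
    simp only [hPA, hSA, Finset.mem_filter, Finset.mem_univ, true_and] at *
    simp [hv]
  have hPSB : PB ⊆ SB := by
    intro v hv
    simp only [hPB, hSB, Finset.mem_filter, Finset.mem_univ, true_and] at *
    simp [hv]
  have e1 : Finset.univ.filter (fun v => hinf (A v) (B v) = 1) = PA ∩ PB := by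
    ext v
    simp only [Finset.mem_filter, Finset.mem_inter, Finset.mem_univ, true_and, hPA, hPB]
    exact (key (A v) (B v) (hA v) (hB v)).1
  have e2 : Finset.univ.filter (fun v => hinf (A v) (B v) ≠ 0) = SA ∪ SB := by
    ext v
    simp only [Finset.mem_filter, Finset.mem_union, Finset.mem_univ, true_and, hSA, hSB]
    exact (key (A v) (B v) (hA v) (hB v)).2.1
  have e3 : Finset.univ.filter (fun v => hsup (A v) (B v) = 1) = (PA ∩ SB) ∪ (SA ∩ PB) := by
    ext v
    simp only [Finset.mem_filter, Finset.mem_union, Finset.mem_inter, Finset.mem_univ,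
      true_and, hPA, hPB, hSA, hSB]
    exact (key (A v) (B v) (hA v) (hB v)).2.2.1
  have e4 : Finset.univ.filter (fun v => hsup (A v) (B v) ≠ 0) = (SA ∩ SB) ∪ PA ∪ PB := by
    ext v
    simp only [Finset.mem_filter, Finset.mem_union, Finset.mem_inter, Finset.mem_univ,
      true_and, hPA, hPB, hSA, hSB]
    rw [(key (A v) (B v) (hA v) (hB v)).2.2.2]
    tauto
  have s1 := hsub PA SB
  have s2 := hsub SA PB
  have s3 := hsub (PA ∩ SB) (SA ∩ PB)
  have s4 := hsub (PA ∪ SB) (SA ∪ PB)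
  have i3 : (PA ∩ SB) ∩ (SA ∩ PB) = PA ∩ PB := by
    ext v
    simp only [Finset.mem_inter]
    constructor
    · tauto
    · rintro ⟨h1, h2⟩; exact ⟨⟨h1, hPSB h2⟩, hPSA h1, h2⟩
  have u4 : (PA ∪ SB) ∪ (SA ∪ PB) = SA ∪ SB := by
    ext v
    have h1 := @hPSA v
    have h2 := @hPSB v
    simp only [Finset.mem_union]
    tauto
  have i4 : (PA ∪ SB) ∩ (SA ∪ PB) = (SA ∩ SB) ∪ PA ∪ PB := by
    ext v
    have h1 := @hPSA v
    have h2 := @hPSB v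
    simp only [Finset.mem_inter, Finset.mem_union]
    tauto
  rw [i3] at s3
  rw [i4, u4] at s4
  rw [hhat A, hhat B, hhat (fun v => hinf (A v) (B v)), hhat (fun v => hsup (A v) (B v))]
  simp only [e1, e2, e3, e4]
  linarith
end

section
/- The unary relaxation is k-submodular: let f : {1,...,k} → ℝ, let d₁ be a minimizer of f over {1,...,k} and d₂ a minimizer of f over {1,...,k} \ {d₁}, and extend f to f' on {0,...,k} by f'(0) = (f(d₁)+f(d₂))/2 and f'(d)=f(d) for d ≥ 1. Then for all x, y ∈ {0,...,k}, f'(x) + f'(y) ≥ f'(x ⊓ y) + f'(x ⊔ y). -/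
theorem stmt5 (k : ℕ) (f : ℕ → ℝ) (d1 d2 : ℕ)
    (hd1 : 1 ≤ d1 ∧ d1 ≤ k) (hd2 : 1 ≤ d2 ∧ d2 ≤ k) (hne : d2 ≠ d1)
    (hmin1 : ∀ d, 1 ≤ d → d ≤ k → f d1 ≤ f d)
    (hmin2 : ∀ d, 1 ≤ d → d ≤ k → d ≠ d1 → f d2 ≤ f d)
    (f' : ℕ → ℝ) (hf'0 : f' 0 = (f d1 + f d2) / 2)
    (hf' : ∀ d, 1 ≤ d → d ≤ k → f' d = f d) :
    ∀ x y, x ≤ k → y ≤ k → f' x + f' y ≥ f' (dinf x y) + f' (dsup x y) := by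
  intro x y hx hy
  by_cases hxy : x = y
  · simp [dinf, dsup, hxy]
  · by_cases hx0 : x = 0
    · subst hx0
      simp [dinf, dsup, Ne.symm hxy, hxy]
    · by_cases hy0 : y = 0
      · subst hy0
        simp [dinf, dsup, hxy, hx0]
        linarith
      · -- both nonzero, distinct
        have hx1 : 1 ≤ x := Nat.one_le_iff_ne_zero.mpr hx0
        have hy1 : 1 ≤ y := Nat.one_le_iff_ne_zero.mpr hy0
        simp only [dinf, dsup, if_neg hxy, if_neg hx0, if_neg hy0]
        rw [hf'0, hf' x hx1 hx, hf' y hy1 hy]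
        have key : f d1 + f d2 ≤ f x + f y := by
          by_cases hxd1 : x = d1
          · have : y ≠ d1 := fun h => hxy (hxd1.trans h.symm)
            have h1 : f d1 ≤ f x := hmin1 x hx1 hx
            have h2 : f d2 ≤ f y := hmin2 y hy1 hy this
            linarith
          · have h1 : f d1 ≤ f y := hmin1 y hy1 hy
            have h2 : f d2 ≤ f x := hmin2 x hx1 hx hxd1
            linarith
        linarith
end

section
/- The permutation-constraint relaxation is k-submodular: for a permutation π of {1,...,k}, define f : {0,...,k}² → ℝ by f(0,0)=0, f(a,0)=f(0,a)=1/2 for a ≠ 0, f(a,b)=0 if a,b ≠ 0 and a = π(b), and f(a,b)=1 if a,b ≠ 0 and a ≠ π(b). Then f(X)+f(Y) ≥ f(X⊓Y)+f(X⊔Y) for all X, Y ∈ {0,...,k}², with ⊓, ⊔ applied coordinatewise. -/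
lemma dinf_self (x : ℕ) : dinf x x = x := by unfold dinf; split_ifs <;> omega
lemma dinf_zero_left (y : ℕ) : dinf 0 y = 0 := by unfold dinf; split_ifs <;> omega
lemma dinf_zero_right (y : ℕ) : dinf y 0 = 0 := by unfold dinf; split_ifs <;> omega
lemma dsup_self (x : ℕ) : dsup x x = x := by unfold dsup; split_ifs <;> omega
lemma dsup_zero_left (y : ℕ) : dsup 0 y = y := by unfold dsup; split_ifs <;> omega
lemma dsup_zero_right (y : ℕ) : dsup y 0 = y := by unfold dsup; split_ifs <;> omega
lemma dinf_ne (x y : ℕ) (h : x ≠ y) : dinf x y = 0 := by unfold dinf; split_ifs <;> omega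
lemma dsup_ne (x y : ℕ) (hx : x ≠ 0) (hy : y ≠ 0) (h : x ≠ y) : dsup x y = 0 := by
  unfold dsup; split_ifs <;> omega

theorem stmt6 (k : ℕ) (π : Equiv.Perm ℕ)
    (hπ : ∀ d, 1 ≤ d → d ≤ k → 1 ≤ π d ∧ π d ≤ k)
    (f : ℕ → ℕ → ℝ)
    (hf00 : f 0 0 = 0)
    (hf0 : ∀ a, 1 ≤ a → a ≤ k → f a 0 = 1 / 2 ∧ f 0 a = 1 / 2)
    (hfeq : ∀ a b, 1 ≤ a → a ≤ k → 1 ≤ b → b ≤ k → a = π b → f a b = 0)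
    (hfne : ∀ a b, 1 ≤ a → a ≤ k → 1 ≤ b → b ≤ k → a ≠ π b → f a b = 1) :
    ∀ x1 y1 x2 y2, x1 ≤ k → y1 ≤ k → x2 ≤ k → y2 ≤ k →
      f x1 y1 + f x2 y2 ≥
        f (dinf x1 x2) (dinf y1 y2) + f (dsup x1 x2) (dsup y1 y2) := by
  -- nonnegativity
  have hnn : ∀ a b, a ≤ k → b ≤ k → 0 ≤ f a b := by
    intro a b ha hb
    rcases Nat.eq_zero_or_pos a with rfl | ha1
    · rcases Nat.eq_zero_or_pos b with rfl | hb1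
      · rw [hf00]
      · rw [(hf0 b hb1 hb).2]; norm_num
    · rcases Nat.eq_zero_or_pos b with rfl | hb1
      · rw [(hf0 a ha1 ha).1]; norm_num
      · by_cases h : a = π b
        · rw [hfeq a b ha1 ha hb1 hb h]
        · rw [hfne a b ha1 ha hb1 hb h]; norm_num
  -- upper bound 1 for nonzero arguments
  have hle1 : ∀ a b, 1 ≤ a → a ≤ k → 1 ≤ b → b ≤ k → f a b ≤ 1 := by
    intro a b ha1 ha hb1 hb
    by_cases h : a = π b
    · rw [hfeq a b ha1 ha hb1 hb h]; norm_num
    · rw [hfne a b ha1 ha hb1 hb h]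
  -- f with a zero argument is at most 1/2
  have hzl : ∀ a, a ≤ k → f 0 a ≤ 1 / 2 := by
    intro a ha
    rcases Nat.eq_zero_or_pos a with rfl | ha1
    · rw [hf00]; norm_num
    · rw [(hf0 a ha1 ha).2]
  have hzr : ∀ a, a ≤ k → f a 0 ≤ 1 / 2 := by
    intro a ha
    rcases Nat.eq_zero_or_pos a with rfl | ha1
    · rw [hf00]; norm_num
    · rw [(hf0 a ha1 ha).1]
  -- two distinct nonzero first arguments, same nonzero second argument: sum ≥ 1
  have hsum1 : ∀ a b y, 1 ≤ a → a ≤ k → 1 ≤ b → b ≤ k → 1 ≤ y → y ≤ k → a ≠ b →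
      1 ≤ f a y + f b y := by
    intro a b y ha1 ha hb1 hb hy1 hy hab
    by_cases h : a = π y
    · have h2 : b ≠ π y := fun hb2 => hab (h.trans hb2.symm)
      rw [hfne b y hb1 hb hy1 hy h2]
      have := hnn a y ha hy
      linarith
    · rw [hfne a y ha1 ha hy1 hy h]
      have := hnn b y hb hy
      linarith
  -- same nonzero first argument, two distinct nonzero second arguments: sum ≥ 1
  have hsum2 : ∀ x a b, 1 ≤ x → x ≤ k → 1 ≤ a → a ≤ k → 1 ≤ b → b ≤ k → a ≠ b →
      1 ≤ f x a + f x b := by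
    intro x a b hx1 hx ha1 ha hb1 hb hab
    by_cases h : x = π a
    · have h2 : x ≠ π b := by
        intro h2
        exact hab (π.injective (h.symm.trans h2))
      rw [hfne x b hx1 hx hb1 hb h2]
      have := hnn x a hx ha
      linarith
    · rw [hfne x a hx1 hx ha1 ha h]
      have := hnn x b hx hb
      linarith
  intro x1 y1 x2 y2 hx1 hy1 hx2 hy2
  by_cases hx : x1 = x2
  · -- x1 = x2
    subst hx
    rw [dinf_self, dsup_self]
    by_cases hy : y1 = y2
    · subst hy; rw [dinf_self, dsup_self]
    · by_cases hy10 : y1 = 0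
      · subst hy10
        rw [dinf_zero_left, dsup_zero_left]
      · by_cases hy20 : y2 = 0
        · subst hy20
          rw [dinf_zero_right, dsup_zero_right]; linarith
        · rw [dinf_ne y1 y2 hy, dsup_ne y1 y2 hy10 hy20 hy]
          rcases Nat.eq_zero_or_pos x1 with rfl | hx11
          · rw [hf00, (hf0 y1 (Nat.pos_of_ne_zero hy10) hy1).2,
              (hf0 y2 (Nat.pos_of_ne_zero hy20) hy2).2]
            norm_num
          · have h1 := hsum2 x1 y1 y2 hx11 hx1 (Nat.pos_of_ne_zero hy10) hy1
              (Nat.pos_of_ne_zero hy20) hy2 hy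
            have h2 := hzr x1 hx1
            linarith
  · by_cases hx10 : x1 = 0
    · -- x1 = 0, x2 ≠ x1
      subst hx10
      rw [dinf_zero_left, dsup_zero_left]
      by_cases hy : y1 = y2
      · subst hy; rw [dinf_self, dsup_self]
      · by_cases hy10 : y1 = 0
        · subst hy10; rw [dinf_zero_left, dsup_zero_left]
        · by_cases hy20 : y2 = 0
          · subst hy20
            rw [dinf_zero_right, dsup_zero_right, hf00]
            have h1 := (hf0 y1 (Nat.pos_of_ne_zero hy10) hy1).2
            rcases Nat.eq_zero_or_pos x2 with rfl | hx21
            · rw [hf00]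
              have := hzl y1 hy1
              linarith
            · rw [(hf0 x2 hx21 hx2).1]
              have h2 := hle1 x2 y1 hx21 hx2 (Nat.pos_of_ne_zero hy10) hy1
              linarith
          · rw [dinf_ne y1 y2 hy, dsup_ne y1 y2 hy10 hy20 hy, hf00]
            have h1 := (hf0 y1 (Nat.pos_of_ne_zero hy10) hy1).2
            have h2 := hnn x2 y2 hx2 hy2
            have h3 := hzr x2 hx2
            linarith
    · by_cases hx20 : x2 = 0
      · -- x2 = 0, x1 ≠ 0
        subst hx20
        rw [dinf_zero_right, dsup_zero_right]
        by_cases hy : y1 = y2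
        · subst hy; rw [dinf_self, dsup_self]; linarith
        · by_cases hy10 : y1 = 0
          · subst hy10
            rw [dinf_zero_left, dsup_zero_left, hf00]
            have h1 := (hf0 y2 (Nat.pos_of_ne_zero (fun h => hy h.symm)) hy2).2
            rw [(hf0 x1 (Nat.pos_of_ne_zero hx10) hx1).1]
            have h2 := hle1 x1 y2 (Nat.pos_of_ne_zero hx10) hx1
              (Nat.pos_of_ne_zero (fun h => hy h.symm)) hy2
            linarith
          · by_cases hy20 : y2 = 0
            · subst hy20; rw [dinf_zero_right, dsup_zero_right, hf00]; linarith
            · rw [dinf_ne y1 y2 hy, dsup_ne y1 y2 hy10 hy20 hy, hf00]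
              have h1 := (hf0 y2 (Nat.pos_of_ne_zero hy20) hy2).2
              have h2 := hnn x1 y1 hx1 hy1
              have h3 := hzr x1 hx1
              linarith
      · -- x1, x2 distinct nonzero
        rw [dinf_ne x1 x2 hx, dsup_ne x1 x2 hx10 hx20 hx]
        have hx11 := Nat.pos_of_ne_zero hx10
        have hx21 := Nat.pos_of_ne_zero hx20
        by_cases hy : y1 = y2
        · subst hy
          rw [dinf_self, dsup_self]
          rcases Nat.eq_zero_or_pos y1 with rfl | hy11
          · rw [hf00, (hf0 x1 hx11 hx1).1, (hf0 x2 hx21 hx2).1]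
            norm_num
          · have h1 := hsum1 x1 x2 y1 hx11 hx1 hx21 hx2 hy11 hy1 hx
            have h2 := hzl y1 hy1
            linarith
        · by_cases hy10 : y1 = 0
          · subst hy10
            rw [dinf_zero_left, dsup_zero_left, hf00]
            have h1 := (hf0 x1 hx11 hx1).1
            have h2 := hnn x2 y2 hx2 hy2
            have h3 := hzl y2 hy2
            linarith
          · by_cases hy20 : y2 = 0
            · subst hy20
              rw [dinf_zero_right, dsup_zero_right, hf00]
              have h1 := (hf0 x2 hx21 hx2).1
              have h2 := hnn x1 y1 hx1 hy1
              have h3 := hzl y1 hy1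
              linarith
            · rw [dinf_ne y1 y2 hy, dsup_ne y1 y2 hy10 hy20 hy, hf00]
              have h2 := hnn x1 y1 hx1 hy1
              have h3 := hnn x2 y2 hx2 hy2
              linarith
end

section
/- The disjunction-constraint relaxation is k-submodular: for fixed a, b ∈ {1,...,k}, define f : {0,...,k}² → ℝ by f(x,y) = 0 if x ∈ {0,a} and y ∈ {0,b}; f(x,y) = 1/2 if exactly one of the coordinates is a nonzero 'unsafe' value (x ∉ {0,a} or y ∉ {0,b}, but not both); f(x,y) = 1 if x ∉ {0,a} and y ∉ {0,b}. Then f(X)+f(Y) ≥ f(X⊓Y)+f(X⊔Y) for all X, Y ∈ {0,...,k}². -/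
lemma coord_ineq (a x1 x2 : ℕ) :
    (if x1 = 0 ∨ x1 = a then (0:ℝ) else 1) + (if x2 = 0 ∨ x2 = a then (0:ℝ) else 1) ≥
    (if dinf x1 x2 = 0 ∨ dinf x1 x2 = a then (0:ℝ) else 1) +
    (if dsup x1 x2 = 0 ∨ dsup x1 x2 = a then (0:ℝ) else 1) := by
  unfold dinf dsup
  split_ifs <;> simp_all <;> norm_num

theorem stmt7 (k : ℕ) (a b : ℕ) (ha : 1 ≤ a ∧ a ≤ k) (hb : 1 ≤ b ∧ b ≤ k)
    (f : ℕ → ℕ → ℝ)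
    (hf : ∀ x y, f x y =
      ((if x = 0 ∨ x = a then (0 : ℝ) else 1) +
       (if y = 0 ∨ y = b then (0 : ℝ) else 1)) / 2) :
    ∀ x1 y1 x2 y2, x1 ≤ k → y1 ≤ k → x2 ≤ k → y2 ≤ k →
      f x1 y1 + f x2 y2 ≥
        f (dinf x1 x2) (dinf y1 y2) + f (dsup x1 x2) (dsup y1 y2) := by
  intro x1 y1 x2 y2 _ _ _ _
  simp only [hf]
  have h1 := coord_ineq a x1 x2
  have h2 := coord_ineq b y1 y2
  linarith
end

section
/- The soft wide equality relaxation is k-submodular: define f : {0,...,k}^r → ℝ by f(X) = 1 if X contains two distinct nonzero values, f(X) = 1/2 if all nonzero entries of X are equal but X contains both a zero and a nonzero entry, and f(X) = 0 if X is constant. Then f(X)+f(Y) ≥ f(X⊓Y)+f(X⊔Y) for all X, Y ∈ {0,...,k}^r. -/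
namespace Stmt8Aux

/-- two distinct nonzero values -/
def Dd {r : ℕ} (Z : Fin r → ℕ) : Prop := ∃ i j, Z i ≠ 0 ∧ Z j ≠ 0 ∧ Z i ≠ Z j

/-- constant -/
def Cc {r : ℕ} (Z : Fin r → ℕ) : Prop := ∀ i j, Z i = Z j

lemma dinf_comm (x y : ℕ) : dinf x y = dinf y x := by
  unfold dinf; split_ifs <;> omega

lemma dsup_comm (x y : ℕ) : dsup x y = dsup y x := by
  unfold dsup; split_ifs <;> omega

lemma dinf_ne_zero {x y : ℕ} (h : dinf x y ≠ 0) : x = y ∧ dinf x y = x := by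
  unfold dinf at *; split_ifs at h ⊢ <;> omega

lemma dsup_ne_zero {x y : ℕ} (h : dsup x y ≠ 0) :
    (x = dsup x y ∨ x = 0) ∧ (y = dsup x y ∨ y = 0) ∧ (x = dsup x y ∨ y = dsup x y) := by
  unfold dsup at *; split_ifs at h ⊢ <;> omega

lemma dinf_zero_right (x : ℕ) : dinf x 0 = 0 := by
  unfold dinf; split_ifs <;> omega

lemma dinf_ne (x y : ℕ) (h : x ≠ y) : dinf x y = 0 := by
  unfold dinf; split_ifs <;> omega

lemma dsup_zero_right (x : ℕ) : dsup x 0 = x := by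
  unfold dsup; split_ifs <;> omega

section FVals

variable {r : ℕ} (f : (Fin r → ℕ) → ℝ)
    (hf1 : ∀ X : Fin r → ℕ,
      (∃ i j, X i ≠ 0 ∧ X j ≠ 0 ∧ X i ≠ X j) → f X = 1)
    (hf2 : ∀ X : Fin r → ℕ, (∀ i j, X i ≠ 0 → X j ≠ 0 → X i = X j) →
      (∃ i, X i = 0) → (∃ j, X j ≠ 0) → f X = 1 / 2)
    (hf3 : ∀ X : Fin r → ℕ, (∀ i j, X i = X j) → f X = 0)

include hf1 in
lemma fD : ∀ Z : Fin r → ℕ, Dd Z → f Z = 1 := fun Z h => hf1 Z h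

include hf3 in
lemma fC : ∀ Z : Fin r → ℕ, Cc Z → f Z = 0 := fun Z h => hf3 Z h

include hf2 in
lemma fH : ∀ Z : Fin r → ℕ, ¬ Dd Z → ¬ Cc Z → f Z = 1 / 2 := by
  intro Z hd hc
  simp only [Cc, not_forall] at hc
  obtain ⟨i, j, hij⟩ := hc
  have key : (Z i = 0 ∧ Z j ≠ 0) ∨ (Z i ≠ 0 ∧ Z j = 0) := by
    by_cases h0 : Z i = 0
    · exact Or.inl ⟨h0, fun h => hij (h0.trans h.symm)⟩
    · refine Or.inr ⟨h0, ?_⟩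
      by_contra h1
      exact hd ⟨i, j, h0, h1, hij⟩
  apply hf2
  · intro a b ha hb; by_contra hne; exact hd ⟨a, b, ha, hb, hne⟩
  · rcases key with ⟨h, _⟩ | ⟨_, h⟩
    · exact ⟨i, h⟩
    · exact ⟨j, h⟩
  · rcases key with ⟨_, h⟩ | ⟨h, _⟩
    · exact ⟨j, h⟩
    · exact ⟨i, h⟩

include hf1 hf2 hf3 in
lemma fub : ∀ Z : Fin r → ℕ, f Z ≤ 1 := by
  intro Z
  by_cases hd : Dd Z
  · rw [fD f hf1 Z hd]
  · by_cases hc : Cc Z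
    · rw [fC f hf3 Z hc]; norm_num
    · rw [fH f hf2 Z hd hc]; norm_num

include hf1 hf2 hf3 in
lemma flb : ∀ Z : Fin r → ℕ, 0 ≤ f Z := by
  intro Z
  by_cases hd : Dd Z
  · rw [fD f hf1 Z hd]; norm_num
  · by_cases hc : Cc Z
    · rw [fC f hf3 Z hc]
    · rw [fH f hf2 Z hd hc]; norm_num

include hf2 hf3 in
lemma fub2 : ∀ Z : Fin r → ℕ, ¬ Dd Z → f Z ≤ 1 / 2 := by
  intro Z hd
  by_cases hc : Cc Z
  · rw [fC f hf3 Z hc]; norm_num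
  · rw [fH f hf2 Z hd hc]

end FVals

lemma DM_imp {r : ℕ} {X Y : Fin r → ℕ}
    (h : Dd (fun i => dinf (X i) (Y i))) : Dd X ∧ Dd Y := by
  obtain ⟨i, j, hi, hj, hij⟩ := h
  have hi' : dinf (X i) (Y i) ≠ 0 := hi
  have hj' : dinf (X j) (Y j) ≠ 0 := hj
  obtain ⟨e1, e2⟩ := dinf_ne_zero hi'
  obtain ⟨e3, e4⟩ := dinf_ne_zero hj'
  have hij' : dinf (X i) (Y i) ≠ dinf (X j) (Y j) := hij
  exact ⟨⟨i, j, by omega, by omega, by omega⟩, ⟨i, j, by omega, by omega, by omega⟩⟩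

/-- If `X` is constant, `Y` is not constant and has no two distinct nonzero values,
then the meet or the join is constant. -/
lemma aux3 {r : ℕ} (X Y : Fin r → ℕ) (hdy : ¬ Dd Y) (hcx : Cc X) (hcy : ¬ Cc Y) :
    Cc (fun i => dinf (X i) (Y i)) ∨ Cc (fun i => dsup (X i) (Y i)) := by
  simp only [Cc, not_forall] at hcy
  obtain ⟨i0, j0, hij0⟩ := hcy
  by_cases ha : X i0 = 0
  · -- X ≡ 0, meet is 0
    left
    intro a b
    have hXa : X a = 0 := (hcx a i0).trans ha
    have hXb : X b = 0 := (hcx b i0).trans ha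
    show dinf (X a) (Y a) = dinf (X b) (Y b)
    rw [hXa, hXb, dinf_comm, dinf_zero_right, dinf_comm, dinf_zero_right]
  · by_cases hya : ∃ l, Y l = X i0
    · -- join is constantly X i0
      right
      obtain ⟨l0, hl0⟩ := hya
      have hl0' : Y l0 ≠ 0 := by rw [hl0]; exact ha
      have hY : ∀ l, Y l = 0 ∨ Y l = X i0 := by
        intro l
        by_contra h
        push_neg at h
        exact hdy ⟨l, l0, h.1, hl0', by rw [hl0]; exact h.2⟩
      have key : ∀ l, dsup (X l) (Y l) = X i0 := by
        intro l
        rw [hcx l i0]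
        rcases hY l with h | h <;> rw [h]
        · exact dsup_zero_right _
        · unfold dsup; simp
      intro a b
      show dsup (X a) (Y a) = dsup (X b) (Y b)
      rw [key a, key b]
    · -- meet is 0
      left
      push_neg at hya
      have key : ∀ l, dinf (X l) (Y l) = 0 := by
        intro l
        rw [hcx l i0]
        exact dinf_ne _ _ (fun h => hya l h.symm)
      intro a b
      show dinf (X a) (Y a) = dinf (X b) (Y b)
      rw [key a, key b]

section Main

variable {r : ℕ} (f : (Fin r → ℕ) → ℝ)
    (hf1 : ∀ X : Fin r → ℕ,
      (∃ i j, X i ≠ 0 ∧ X j ≠ 0 ∧ X i ≠ X j) → f X = 1)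
    (hf2 : ∀ X : Fin r → ℕ, (∀ i j, X i ≠ 0 → X j ≠ 0 → X i = X j) →
      (∃ i, X i = 0) → (∃ j, X j ≠ 0) → f X = 1 / 2)
    (hf3 : ∀ X : Fin r → ℕ, (∀ i j, X i = X j) → f X = 0)

include hf1 hf2 hf3 in
/-- The case where `X` has two distinct nonzero values. -/
lemma aux1 (X Y : Fin r → ℕ) (hdx : Dd X) :
    f X + f Y ≥
      f (fun i => dinf (X i) (Y i)) + f (fun i => dsup (X i) (Y i)) := by
  have fx : f X = 1 := fD f hf1 X hdx
  by_cases hdy : Dd Y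
  · have fy : f Y = 1 := fD f hf1 Y hdy
    have h1 := fub f hf1 hf2 hf3 (fun i => dinf (X i) (Y i))
    have h2 := fub f hf1 hf2 hf3 (fun i => dsup (X i) (Y i))
    rw [fx, fy]; linarith
  · have hdm : ¬ Dd (fun i => dinf (X i) (Y i)) := fun h => hdy (DM_imp h).2
    have hM := fub2 f hf2 hf3 (fun i => dinf (X i) (Y i)) hdm
    by_cases hcy : Cc Y
    · have fy : f Y = 0 := fC f hf3 Y hcy
      obtain ⟨i0, _, _, _, _⟩ := hdx
      by_cases hb : Y i0 = 0
      · -- Y ≡ 0 : meet ≡ 0, join = X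
        have hY : ∀ l, Y l = 0 := fun l => (hcy l i0).trans hb
        have hMc : Cc (fun i => dinf (X i) (Y i)) := by
          intro a b
          show dinf (X a) (Y a) = dinf (X b) (Y b)
          rw [hY a, hY b, dinf_zero_right, dinf_zero_right]
        have hSX : (fun i => dsup (X i) (Y i)) = X := by
          funext l; show dsup (X l) (Y l) = X l; rw [hY l, dsup_zero_right]
        have fm : f (fun i => dinf (X i) (Y i)) = 0 := fC f hf3 _ hMc
        rw [fx, fy, fm, hSX, fx]; norm_num
      · -- Y ≡ b ≠ 0 : join has no two distinct nonzero values
        have hds : ¬ Dd (fun i => dsup (X i) (Y i)) := by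
          rintro ⟨i, j, hi, hj, hij⟩
          have hi' : dsup (X i) (Y i) ≠ 0 := hi
          have hj' : dsup (X j) (Y j) ≠ 0 := hj
          have hYi : Y i = Y i0 := hcy i i0
          have hYj : Y j = Y i0 := hcy j i0
          have h1 := (dsup_ne_zero hi').2.1
          have h2 := (dsup_ne_zero hj').2.1
          have hij' : dsup (X i) (Y i) ≠ dsup (X j) (Y j) := hij
          omega
        have hS := fub2 f hf2 hf3 (fun i => dsup (X i) (Y i)) hds
        rw [fx, fy]; linarith
    · have fy : f Y = 1 / 2 := fH f hf2 Y hdy hcy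
      have hS := fub f hf1 hf2 hf3 (fun i => dsup (X i) (Y i))
      rw [fx, fy]; linarith

include hf1 hf2 hf3 in
/-- The case where neither `X` nor `Y` has two distinct nonzero values. -/
lemma aux2 (X Y : Fin r → ℕ) (hdx : ¬ Dd X) (hdy : ¬ Dd Y) :
    f X + f Y ≥
      f (fun i => dinf (X i) (Y i)) + f (fun i => dsup (X i) (Y i)) := by
  have hdm : ¬ Dd (fun i => dinf (X i) (Y i)) := fun h => hdy (DM_imp h).2
  have hM := fub2 f hf2 hf3 (fun i => dinf (X i) (Y i)) hdm
  by_cases hds : Dd (fun i => dsup (X i) (Y i))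
  · -- join has two distinct nonzero values
    obtain ⟨i, j, hi, hj, hij⟩ := hds
    have hi' : dsup (X i) (Y i) ≠ 0 := hi
    have hj' : dsup (X j) (Y j) ≠ 0 := hj
    have hij' : dsup (X i) (Y i) ≠ dsup (X j) (Y j) := hij
    obtain ⟨xi, yi, zi⟩ := dsup_ne_zero hi'
    obtain ⟨xj, yj, zj⟩ := dsup_ne_zero hj'
    -- one of X,Y carries the value at i and the other at j (in some order)
    have key : (X i = dsup (X i) (Y i) ∧ X j = 0 ∧ Y i = 0 ∧ Y j = dsup (X j) (Y j)) ∨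
        (X i = 0 ∧ X j = dsup (X j) (Y j) ∧ Y i = dsup (X i) (Y i) ∧ Y j = 0) := by
      have hX : ¬ (X i = dsup (X i) (Y i) ∧ X j = dsup (X j) (Y j)) := by
        rintro ⟨h1, h2⟩; exact hdx ⟨i, j, by omega, by omega, by omega⟩
      have hY : ¬ (Y i = dsup (X i) (Y i) ∧ Y j = dsup (X j) (Y j)) := by
        rintro ⟨h1, h2⟩; exact hdy ⟨i, j, by omega, by omega, by omega⟩
      rcases xi with h1 | h1 <;> rcases xj with h2 | h2 <;>
        rcases yi with h3 | h3 <;> rcases yj with h4 | h4 <;> omega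
    -- in either case: X and Y are non-constant, and the meet is constantly 0
    have main : ∀ a b : Fin r, X a ≠ 0 → X b = 0 → Y a = 0 → Y b ≠ 0 →
        f X + f Y ≥
          f (fun i => dinf (X i) (Y i)) + f (fun i => dsup (X i) (Y i)) := by
      intro a b hXa hXb hYa hYb
      have hcx : ¬ Cc X := fun h => hXa ((h a b).trans hXb)
      have hcy : ¬ Cc Y := fun h => hYb ((h b a).trans hYa)
      have fx : f X = 1 / 2 := fH f hf2 X hdx hcx
      have fy : f Y = 1 / 2 := fH f hf2 Y hdy hcy
      have hM0 : ∀ l, dinf (X l) (Y l) = 0 := by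
        intro l
        by_contra h
        obtain ⟨e1, e2⟩ := dinf_ne_zero h
        have hXl : X l ≠ 0 := by omega
        have hYl : Y l ≠ 0 := by omega
        have hXla : X l = X a := by
          by_contra hh; exact hdx ⟨l, a, hXl, hXa, hh⟩
        have hYlb : Y l = Y b := by
          by_contra hh; exact hdy ⟨l, b, hYl, hYb, hh⟩
        -- then X a = Y b ; but X a and Y b give the two distinct join values
        have hXia : X a = Y b := by omega
        -- derive contradiction with hij' using key
        rcases key with ⟨k1, k2, k3, k4⟩ | ⟨k1, k2, k3, k4⟩
        · -- X i nonzero value, Y j nonzero value; X a = X i, Y b = Y j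
          have e5 : X a = X i := by
            by_contra hh; exact hdx ⟨a, i, hXa, by omega, hh⟩
          have e6 : Y b = Y j := by
            by_contra hh; exact hdy ⟨b, j, hYb, by omega, hh⟩
          omega
        · have e5 : X a = X j := by
            by_contra hh; exact hdx ⟨a, j, hXa, by omega, hh⟩
          have e6 : Y b = Y i := by
            by_contra hh; exact hdy ⟨b, i, hYb, by omega, hh⟩
          omega
      have hMc : Cc (fun i => dinf (X i) (Y i)) := by
        intro a' b'
        show dinf (X a') (Y a') = dinf (X b') (Y b')
        rw [hM0 a', hM0 b']
      have fm : f (fun i => dinf (X i) (Y i)) = 0 := fC f hf3 _ hMc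
      have fs : f (fun i => dsup (X i) (Y i)) = 1 :=
        fD f hf1 _ ⟨i, j, hi, hj, hij⟩
      rw [fx, fy, fm, fs]; norm_num
    rcases key with ⟨k1, k2, k3, k4⟩ | ⟨k1, k2, k3, k4⟩
    · exact main i j (by omega) k2 k3 (by omega)
    · exact main j i (by omega) k1 k4 (by omega)
  · -- join also has no two distinct nonzero values
    have hS := fub2 f hf2 hf3 (fun i => dsup (X i) (Y i)) hds
    have hMlb := flb f hf1 hf2 hf3 (fun i => dinf (X i) (Y i))
    have hSlb := flb f hf1 hf2 hf3 (fun i => dsup (X i) (Y i))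
    by_cases hcx : Cc X <;> by_cases hcy : Cc Y
    · -- both constant : meet and join constant
      have hMc : Cc (fun i => dinf (X i) (Y i)) := by
        intro a b
        show dinf (X a) (Y a) = dinf (X b) (Y b)
        rw [hcx a b, hcy a b]
      have hSc : Cc (fun i => dsup (X i) (Y i)) := by
        intro a b
        show dsup (X a) (Y a) = dsup (X b) (Y b)
        rw [hcx a b, hcy a b]
      rw [fC f hf3 X hcx, fC f hf3 Y hcy, fC f hf3 _ hMc, fC f hf3 _ hSc]
    · -- X constant, Y not
      have fx : f X = 0 := fC f hf3 X hcx
      have fy : f Y = 1 / 2 := fH f hf2 Y hdy hcy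
      rcases aux3 X Y hdy hcx hcy with h | h
      · have fm : f (fun i => dinf (X i) (Y i)) = 0 := fC f hf3 _ h
        rw [fx, fy, fm]; linarith
      · have fs : f (fun i => dsup (X i) (Y i)) = 0 := fC f hf3 _ h
        rw [fx, fy, fs]; linarith
    · -- Y constant, X not : use symmetry
      have fx : f X = 1 / 2 := fH f hf2 X hdx hcx
      have fy : f Y = 0 := fC f hf3 Y hcy
      have hMc : (fun i => dinf (Y i) (X i)) = (fun i => dinf (X i) (Y i)) :=
        funext fun i => dinf_comm _ _
      have hSc : (fun i => dsup (Y i) (X i)) = (fun i => dsup (X i) (Y i)) :=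
        funext fun i => dsup_comm _ _
      rcases aux3 Y X hdx hcy hcx with h | h
      · rw [hMc] at h
        have fm : f (fun i => dinf (X i) (Y i)) = 0 := fC f hf3 _ h
        rw [fx, fy, fm]; linarith
      · rw [hSc] at h
        have fs : f (fun i => dsup (X i) (Y i)) = 0 := fC f hf3 _ h
        rw [fx, fy, fs]; linarith
    · -- both non-constant
      have fx : f X = 1 / 2 := fH f hf2 X hdx hcx
      have fy : f Y = 1 / 2 := fH f hf2 Y hdy hcy
      rw [fx, fy]; linarith

end Main

end Stmt8Aux

theorem stmt8 (k r : ℕ) (f : (Fin r → ℕ) → ℝ)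
    (hf1 : ∀ X : Fin r → ℕ,
      (∃ i j, X i ≠ 0 ∧ X j ≠ 0 ∧ X i ≠ X j) → f X = 1)
    (hf2 : ∀ X : Fin r → ℕ, (∀ i j, X i ≠ 0 → X j ≠ 0 → X i = X j) →
      (∃ i, X i = 0) → (∃ j, X j ≠ 0) → f X = 1 / 2)
    (hf3 : ∀ X : Fin r → ℕ, (∀ i j, X i = X j) → f X = 0) :
    ∀ X Y : Fin r → ℕ, (∀ i, X i ≤ k) → (∀ i, Y i ≤ k) →
      f X + f Y ≥
        f (fun i => dinf (X i) (Y i)) + f (fun i => dsup (X i) (Y i)) := by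
  intro X Y _ _
  by_cases hdx : Stmt8Aux.Dd X
  · exact Stmt8Aux.aux1 f hf1 hf2 hf3 X Y hdx
  · by_cases hdy : Stmt8Aux.Dd Y
    · have h := Stmt8Aux.aux1 f hf1 hf2 hf3 Y X hdy
      have hMc : (fun i => dinf (Y i) (X i)) = (fun i => dinf (X i) (Y i)) :=
        funext fun i => Stmt8Aux.dinf_comm _ _
      have hSc : (fun i => dsup (Y i) (X i)) = (fun i => dsup (X i) (Y i)) :=
        funext fun i => Stmt8Aux.dsup_comm _ _
      rw [hMc, hSc] at h
      linarith
    · exact Stmt8Aux.aux2 f hf1 hf2 hf3 X Y hdx hdy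
end

section
/- Let R ⊆ {0,...,k}² be closed under the coordinatewise k-submodular operations ⊓, ⊔, and let a ∈ {1,...,k}. If there exist two distinct b, b' ∈ {1,...,k} with (a,b), (a,b') ∈ R, then (a,d) ∈ R for every d ∈ {1,...,k} such that d occurs as a second coordinate of some pair in R with nonzero second coordinate. -/
theorem stmt11 (k : ℕ) (R : Set (ℕ × ℕ))
    (hRinf : ∀ p q : ℕ × ℕ, p ∈ R → q ∈ R → (dinf p.1 q.1, dinf p.2 q.2) ∈ R)
    (hRsup : ∀ p q : ℕ × ℕ, p ∈ R → q ∈ R → (dsup p.1 q.1, dsup p.2 q.2) ∈ R)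
    (a b b' : ℕ) (ha : 1 ≤ a ∧ a ≤ k) (hb : 1 ≤ b ∧ b ≤ k)
    (hb' : 1 ≤ b' ∧ b' ≤ k) (hbb' : b ≠ b')
    (hab : (a, b) ∈ R) (hab' : (a, b') ∈ R) :
    ∀ d, 1 ≤ d → d ≤ k → (∃ a'', (a'', d) ∈ R) → (a, d) ∈ R := by
  intro d hd1 hdk ⟨a'', had⟩
  have ha0 : (a, 0) ∈ R := by
    have := hRinf (a, b) (a, b') hab hab'
    simpa [dinf, hbb'] using this
  have hd0 : d ≠ 0 := by omega
  have h1 : (dsup a a'', d) ∈ R := by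
    have := hRsup (a, 0) (a'', d) ha0 had
    simpa [dsup, hd0, Ne.symm hd0] using this
  by_cases h : dsup a a'' = a
  · rwa [h] at h1
  · have h0 : dsup a a'' = 0 := by
      unfold dsup at *
      split_ifs at * <;> simp_all
    rw [h0] at h1
    have := hRsup (a, 0) (0, d) ha0 h1
    have haz : a ≠ 0 := by omega
    simpa [dsup, hd0, Ne.symm hd0, haz] using this
end

section
/- (Picard–Queyranne) Let (G, c) be a network with source s and sink t and let f be a maximum s-t flow. Then an s-t cut S (with s ∈ S, t ∉ S) is a minimum cut if and only if S is a closed set in the residual graph G_f, i.e., no edge of G_f leaves S. -/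
/-!
For any flow `g` and cut `S`, conservation gives `|g| = ∑_{u ∈ S, v ∉ S} (g(u,v) - g(v,u))`,
which is at most the capacity of `S`, with equality exactly when every edge leaving `S` is
saturated and every edge entering `S` carries no flow, i.e. when `S` is closed in `G_f`.
A maximum flow admits no augmenting path: walking a residual `s`-`v` path edge by edge builds a
direction `D` sending one unit from `s` to `v` along which `f + εD` stays feasible for small
`ε > 0`. So the set of vertices reachable from `s` in `G_f` is a closed cut, its capacity is `|f|`,
and a cut is minimum iff its capacity is `|f|`, iff it is closed.
-/

open Finset Filter Topology Relation

namespace FlowNetwork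

variable {V : Type*} [Fintype V]

def netOutflow : (V → V → ℝ) →ₗ[ℝ] V → ℝ where
  toFun g v := ∑ w, g v w - ∑ w, g w v
  map_add' g h := by ext v; simp only [Pi.add_apply, sum_add_distrib]; ring
  map_smul' r g := by ext v; simp only [Pi.smul_apply, smul_eq_mul, ← mul_sum, RingHom.id_apply]; ring

lemma netOutflow_apply (g : V → V → ℝ) (v : V) :
    netOutflow g v = ∑ w, g v w - ∑ w, g w v := rfl

variable [DecidableEq V]

omit [Fintype V] in
lemma single_single_apply (a b u w : V) :
    (Pi.single a (Pi.single b 1) : V → V → ℝ) u w = if u = a ∧ w = b then 1 else 0 := by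
  by_cases hu : u = a <;> by_cases hw : w = b <;> simp [hu, hw]

lemma netOutflow_single_single (a b : V) :
    netOutflow (Pi.single a (Pi.single b 1) : V → V → ℝ) = Pi.single a 1 - Pi.single b 1 := by
  ext v
  simp only [netOutflow_apply, single_single_apply, ite_and]
  by_cases hva : v = a <;> by_cases hvb : v = b <;> simp [hva, hvb, Pi.single_apply]

def IsFeasible (c g : V → V → ℝ) : Prop := ∀ u v, 0 ≤ g u v ∧ g u v ≤ c u v

structure IsFlow (c : V → V → ℝ) (s t : V) (g : V → V → ℝ) : Prop where
  feasible : IsFeasible c g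
  conserve : ∀ v, v ≠ s → v ≠ t → netOutflow g v = 0

def Residual (c f : V → V → ℝ) (u v : V) : Prop := f u v < c u v ∨ 0 < f v u

def cutCap (c : V → V → ℝ) (S : Finset V) : ℝ := ∑ u ∈ S, ∑ v ∈ Sᶜ, c u v

variable {c f g : V → V → ℝ} {s t : V} {S : Finset V}

lemma netOutflow_eq_sum_cut (hg : ∀ v, v ≠ s → v ≠ t → netOutflow g v = 0)
    (hs : s ∈ S) (ht : t ∉ S) :
    netOutflow g s = ∑ u ∈ S, ∑ v ∈ Sᶜ, (g u v - g v u) := by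
  have hS : ∑ u ∈ S, netOutflow g u = netOutflow g s :=
    sum_eq_single_of_mem s hs fun u hu hus => hg u hus (by rintro rfl; exact ht hu)
  have hinside : ∑ u ∈ S, ∑ v ∈ S, (g u v - g v u) = 0 := by
    rw [← sub_eq_zero.2 (sum_comm (s := S) (t := S) (f := g))]
    simp only [sum_sub_distrib]
  calc netOutflow g s = ∑ u ∈ S, ∑ v, (g u v - g v u) := by
        simp only [← hS, netOutflow_apply, sum_sub_distrib]
    _ = ∑ u ∈ S, ∑ v ∈ Sᶜ, (g u v - g v u) := by
        simp only [← sum_add_sum_compl S, sum_add_distrib, hinside, zero_add]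

lemma netOutflow_le_cutCap (hg : IsFlow c s t g) (hs : s ∈ S) (ht : t ∉ S) :
    netOutflow g s ≤ cutCap c S := by
  rw [netOutflow_eq_sum_cut hg.conserve hs ht]
  exact sum_le_sum fun u _ => sum_le_sum fun v _ => by
    linarith [(hg.feasible u v).2, (hg.feasible v u).1]

lemma cutCap_eq_netOutflow_iff (hf : IsFlow c s t f) (hs : s ∈ S) (ht : t ∉ S) :
    cutCap c S = netOutflow f s ↔ ∀ u ∈ S, ∀ v, v ∉ S → ¬ Residual c f u v := by
  have hslack : ∀ u v, 0 ≤ c u v - (f u v - f v u) := fun u v => by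
    linarith [(hf.feasible u v).2, (hf.feasible v u).1]
  have hslack_eq_zero : ∀ u v, c u v - (f u v - f v u) = 0 ↔ ¬ Residual c f u v := fun u v => by
    have := hf.feasible u v; have := hf.feasible v u
    unfold Residual; constructor
    · intro h; push Not; constructor <;> linarith
    · intro h; push Not at h; linarith
  have hdiff : cutCap c S - netOutflow f s = ∑ u ∈ S, ∑ v ∈ Sᶜ, (c u v - (f u v - f v u)) := by
    simp only [netOutflow_eq_sum_cut hf.conserve hs ht, cutCap, sum_sub_distrib]
  rw [← sub_eq_zero, hdiff, sum_eq_zero_iff_of_nonneg fun u _ => sum_nonneg fun v _ => hslack u v]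
  refine forall₂_congr fun u _ => ?_
  simp only [sum_eq_zero_iff_of_nonneg fun v _ => hslack u v, mem_compl, hslack_eq_zero]

def IsAugmentingDirection (c f : V → V → ℝ) (s v : V) (D : V → V → ℝ) : Prop :=
  netOutflow D = Pi.single s 1 - Pi.single v 1 ∧ ∀ᶠ ε in 𝓝[>] (0 : ℝ), IsFeasible c (f + ε • D)

lemma tendsto_add_mul_nhdsGT (x y : ℝ) :
    Tendsto (fun ε : ℝ => x + ε * y) (𝓝[>] 0) (𝓝 x) := by
  have : Tendsto (fun ε : ℝ => x + ε * y) (𝓝 0) (𝓝 (x + 0 * y)) :=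
    ((continuous_id.mul continuous_const).const_add x).tendsto 0
  simpa using this.mono_left nhdsWithin_le_nhds

namespace IsAugmentingDirection

variable {c f D : V → V → ℝ} {s a b : V}

lemma add_single (hD : IsAugmentingDirection c f s a D) (hab : f a b < c a b) :
    IsAugmentingDirection c f s b (D + Pi.single a (Pi.single b 1)) := by
  refine ⟨by rw [map_add, hD.1, netOutflow_single_single]; abel, ?_⟩
  have hnear := (tendsto_add_mul_nhdsGT (f a b) (D a b + 1)).eventually_lt_const hab
  filter_upwards [hD.2, hnear, self_mem_nhdsWithin] with ε hfeas hlt (hε : 0 < ε) u w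
  have := hfeas u w
  simp only [Pi.add_apply, Pi.smul_apply, smul_eq_mul, single_single_apply] at this ⊢
  split_ifs with h
  · obtain ⟨rfl, rfl⟩ := h
    constructor <;> nlinarith
  · simpa using this

lemma sub_single (hD : IsAugmentingDirection c f s a D) (hba : 0 < f b a) :
    IsAugmentingDirection c f s b (D - Pi.single b (Pi.single a 1)) := by
  refine ⟨by rw [map_sub, hD.1, netOutflow_single_single]; abel, ?_⟩
  have hnear := (tendsto_add_mul_nhdsGT (f b a) (D b a - 1)).eventually_const_lt hba
  filter_upwards [hD.2, hnear, self_mem_nhdsWithin] with ε hfeas hlt (hε : 0 < ε) u w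
  have := hfeas u w
  simp only [Pi.add_apply, Pi.sub_apply, Pi.smul_apply, smul_eq_mul, single_single_apply] at this ⊢
  split_ifs with h
  · obtain ⟨rfl, rfl⟩ := h
    constructor <;> nlinarith
  · simpa using this

end IsAugmentingDirection

lemma exists_isAugmentingDirection (hf : IsFeasible c f) {v : V}
    (hv : ReflTransGen (Residual c f) s v) : ∃ D, IsAugmentingDirection c f s v D := by
  induction hv with
  | refl => exact ⟨0, by simp, .of_forall fun ε => by simpa using hf⟩
  | tail _ hab ih =>
    obtain ⟨D, hD⟩ := ih
    rcases hab with hab | hba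
    · exact ⟨_, hD.add_single hab⟩
    · exact ⟨_, hD.sub_single hba⟩

def IsMaxFlow (c : V → V → ℝ) (s t : V) (f : V → V → ℝ) : Prop :=
  IsFlow c s t f ∧ ∀ g, IsFlow c s t g → netOutflow g s ≤ netOutflow f s

namespace IsMaxFlow

lemma not_reflTransGen_residual (hf : IsMaxFlow c s t f) (hst : s ≠ t) :
    ¬ ReflTransGen (Residual c f) s t := by
  intro hpath
  obtain ⟨D, hDnet, hDfeas⟩ := exists_isAugmentingDirection hf.1.feasible hpath
  obtain ⟨ε, hfeas, hε : 0 < ε⟩ := (hDfeas.and self_mem_nhdsWithin).exists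
  have hnet : netOutflow (f + ε • D) = netOutflow f + ε • (Pi.single s 1 - Pi.single t 1) := by
    rw [map_add, map_smul, hDnet]
  have hflow : IsFlow c s t (f + ε • D) :=
    ⟨hfeas, fun v hvs hvt => by simp [hnet, hf.1.conserve v hvs hvt, hvs, hvt]⟩
  have := hf.2 _ hflow
  simp only [hnet, Pi.add_apply, Pi.smul_apply, Pi.sub_apply, Pi.single_eq_same,
    Pi.single_eq_of_ne hst, smul_eq_mul] at this
  linarith

lemma exists_cutCap_eq_netOutflow (hf : IsMaxFlow c s t f) (hst : s ≠ t) :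
    ∃ S : Finset V, s ∈ S ∧ t ∉ S ∧ cutCap c S = netOutflow f s := by
  classical
  let S := univ.filter (ReflTransGen (Residual c f) s)
  have hs : s ∈ S := mem_filter.2 ⟨mem_univ s, .refl⟩
  have ht : t ∉ S := by simpa [S] using hf.not_reflTransGen_residual hst
  refine ⟨S, hs, ht, (cutCap_eq_netOutflow_iff hf.1 hs ht).2 fun u hu v hv huv => hv ?_⟩
  simp only [S, mem_filter, mem_univ, true_and] at hu ⊢
  exact hu.tail huv

end IsMaxFlow

end FlowNetwork

open FlowNetwork

theorem stmt15_general {V : Type*} [Fintype V] [DecidableEq V]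
    (c : V → V → ℝ) (s t : V)
    (f : V → V → ℝ)
    (hf0 : ∀ u v, 0 ≤ f u v) (hfc : ∀ u v, f u v ≤ c u v)
    (hcons : ∀ v, v ≠ s → v ≠ t → ∑ u, f u v = ∑ u, f v u)
    -- `f` is a maximum `s`-`t` flow:
    (hmax : ∀ g : V → V → ℝ, (∀ u v, 0 ≤ g u v) → (∀ u v, g u v ≤ c u v) →
      (∀ v, v ≠ s → v ≠ t → ∑ u, g u v = ∑ u, g v u) →
      (∑ v, g s v) - (∑ v, g v s) ≤ (∑ v, f s v) - (∑ v, f v s))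
    (S : Finset V) (hsS : s ∈ S) (htS : t ∉ S) :
    -- `S` is a minimum cut iff no residual edge leaves `S`.
    (∀ S' : Finset V, s ∈ S' → t ∉ S' →
        ∑ u ∈ S, ∑ v ∈ Sᶜ, c u v ≤ ∑ u ∈ S', ∑ v ∈ S'ᶜ, c u v) ↔
      (∀ u ∈ S, ∀ v, v ∉ S → ¬(f u v < c u v ∨ 0 < f v u)) := by
  have hst : s ≠ t := fun h => htS (h ▸ hsS)
  have hflow : IsFlow c s t f :=
    ⟨fun u v => ⟨hf0 u v, hfc u v⟩, fun v hvs hvt => sub_eq_zero.2 (hcons v hvs hvt).symm⟩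
  have hfmax : IsMaxFlow c s t f := ⟨hflow, fun g hg =>
    hmax g (fun u v => (hg.feasible u v).1) (fun u v => (hg.feasible u v).2)
      fun v hvs hvt => (sub_eq_zero.1 (hg.conserve v hvs hvt)).symm⟩
  obtain ⟨S₀, hsS₀, htS₀, hS₀⟩ := hfmax.exists_cutCap_eq_netOutflow hst
  refine Iff.trans ?_ (cutCap_eq_netOutflow_iff hflow hsS htS)
  constructor
  · intro hmin
    exact le_antisymm ((hmin S₀ hsS₀ htS₀).trans hS₀.le) (netOutflow_le_cutCap hflow hsS htS)
  · intro hcap S' hsS' htS'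
    exact hcap.trans_le (netOutflow_le_cutCap hflow hsS' htS')

theorem stmt15 {V : Type*} [Fintype V] [DecidableEq V]
    (c : V → V → ℝ) (hc : ∀ u v, 0 ≤ c u v) (s t : V) (hst : s ≠ t)
    (f : V → V → ℝ)
    (hf0 : ∀ u v, 0 ≤ f u v) (hfc : ∀ u v, f u v ≤ c u v)
    (hcons : ∀ v, v ≠ s → v ≠ t → ∑ u, f u v = ∑ u, f v u)
    -- `f` is a maximum `s`-`t` flow:
    (hmax : ∀ g : V → V → ℝ, (∀ u v, 0 ≤ g u v) → (∀ u v, g u v ≤ c u v) →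
      (∀ v, v ≠ s → v ≠ t → ∑ u, g u v = ∑ u, g v u) →
      (∑ v, g s v) - (∑ v, g v s) ≤ (∑ v, f s v) - (∑ v, f v s))
    (S : Finset V) (hsS : s ∈ S) (htS : t ∉ S) :
    -- `S` is a minimum cut iff no residual edge leaves `S`.
    (∀ S' : Finset V, s ∈ S' → t ∉ S' →
        ∑ u ∈ S, ∑ v ∈ Sᶜ, c u v ≤ ∑ u ∈ S', ∑ v ∈ S'ᶜ, c u v) ↔
      (∀ u ∈ S, ∀ v, v ∉ S → ¬(f u v < c u v ∨ 0 < f v u)) :=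
  stmt15_general c s t f hf0 hfc hcons hmax S hsS htS
end

section
/- Unary network representation: for f : {0,...,k} → ℝ≥0 with minimum over {1,...,k} attained at d₁, the ({v},k)-network with edges c(s, v_{d₁}) = f(0), c(v_{d₁}, t) = f(d₁), and c(v_d, t) = f(d) − f(0) for d ≠ d₁ represents f (i.e., c(S_φ) = f(φ(v)) for each φ(v) ∈ {0,...,k}), provided f(d)+f(d₁) ≥ 2f(0) for all d ≠ d₁ (so that all capacities are nonnegative). Moreover this network is k-submodular: c(S) ≥ c(ν(S)) for every s-t cut S. -/
/-- Vertices of a `({v},k)`-network: `Sum.inl i` is the vertex `v_{i+1}`,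
`Sum.inr false` the source `s`, `Sum.inr true` the sink `t`. -/
abbrev UNetV (k : ℕ) := Fin k ⊕ Bool

/-- The source vertex `s`. -/
def usrc (k : ℕ) : UNetV k := Sum.inr false

/-- The sink vertex `t`. -/
def usnk (k : ℕ) : UNetV k := Sum.inr true

/-- Capacity of a cut `S`: total capacity of edges leaving `S`. -/
def cutCap {W : Type*} [Fintype W] [DecidableEq W]
    (c : W → W → ℝ) (S : Finset W) : ℝ :=
  ∑ u ∈ S, ∑ v ∈ Sᶜ, c u v

/-- The cut corresponding to the assignment `v ↦ x`:
`{s}` if `x = 0` and `{s, v_x}` otherwise. -/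
def ucutOf (k : ℕ) (x : ℕ) : Finset (UNetV k) :=
  insert (usrc k) (Finset.univ.filter fun w =>
    ∃ i : Fin k, w = Sum.inl i ∧ (i : ℕ) + 1 = x)

/-- The normalisation `ν(S)`: keep `s`, and the `v_i`-vertices only when `S`
contains exactly one of them. -/
def unormCut {k : ℕ} (S : Finset (UNetV k)) : Finset (UNetV k) :=
  insert (usrc k) (S.filter fun w =>
    ∃ i : Fin k, w = Sum.inl i ∧ ∀ j : Fin k, Sum.inl j ∈ S → j = i)

lemma key_s17 (k : ℕ) (c : UNetV k → UNetV k → ℝ)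
    (hzero : ∀ u v : UNetV k,
      (¬∃ i : Fin k, (u = usrc k ∧ v = Sum.inl i) ∨
        (u = Sum.inl i ∧ v = usnk k)) → c u v = 0)
    (S : Finset (UNetV k)) (hs : usrc k ∈ S) (ht : usnk k ∉ S) :
    cutCap c S = (∑ i : Fin k, if Sum.inl i ∈ S then c (Sum.inl i) (usnk k)
      else c (usrc k) (Sum.inl i)) := by
  have hz1 : ∀ i j : Fin k, c (Sum.inl i) (Sum.inl j) = 0 := by
    intro i j; apply hzero; simp [usrc, usnk]
  have hz2 : ∀ i : Fin k, c (Sum.inl i) (usrc k) = 0 := by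
    intro i; apply hzero; simp [usrc, usnk]
  have hz3 : ∀ b : Bool, c (usrc k) (Sum.inr b) = 0 := by
    intro b; apply hzero; simp [usrc, usnk]
  have hz4 : ∀ v, c (usnk k) v = 0 := by
    intro v; apply hzero; simp [usrc, usnk]
  have step : ∀ g : UNetV k → ℝ, ∑ u ∈ S, g u = ∑ u : UNetV k, if u ∈ S then g u else 0 := by
    intro g
    rw [Finset.sum_ite_mem, Finset.univ_inter]
  rw [cutCap, step]
  have step2 : ∀ u : UNetV k, (if u ∈ S then ∑ v ∈ Sᶜ, c u v else 0)
      = ∑ v : UNetV k, if u ∈ S ∧ v ∉ S then c u v else 0 := by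
    intro u
    by_cases hu : u ∈ S
    · simp only [hu, if_true, true_and]
      have : ∑ x : UNetV k, (if x ∉ S then c u x else 0)
          = ∑ x : UNetV k, (if x ∈ Sᶜ then c u x else 0) := by simp
      rw [this, Finset.sum_ite_mem, Finset.univ_inter]
    · simp [hu]
  rw [Finset.sum_congr rfl (fun u _ => step2 u)]
  rw [Fintype.sum_sum_type]
  simp only [Fintype.sum_bool]
  simp only [usrc, usnk] at *
  simp only [ht, false_and, if_false, Finset.sum_const_zero, add_zero, zero_add, hs, true_and]
  have e1 : ∀ i : Fin k, (∑ v : UNetV k, if Sum.inl i ∈ S ∧ v ∉ S then c (Sum.inl i) v else 0)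
      = (if Sum.inl i ∈ S then c (Sum.inl i) (Sum.inr true) else 0) := by
    intro i
    rw [Fintype.sum_sum_type, Fintype.sum_bool]
    simp only [hz1, ite_self, Finset.sum_const_zero, hz2, zero_add]
    by_cases h : Sum.inl i ∈ S <;> simp [h, ht]
  have e2 : (∑ v : UNetV k, if v ∉ S then c (Sum.inr false) v else 0)
      = ∑ j : Fin k, (if Sum.inl j ∈ S then 0 else c (Sum.inr false) (Sum.inl j)) := by
    rw [Fintype.sum_sum_type, Fintype.sum_bool]
    simp only [hz3, ite_self, add_zero]
    apply Finset.sum_congr rfl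
    intro j _
    by_cases h : Sum.inl j ∈ S <;> simp [h]
  rw [Finset.sum_congr rfl (fun i _ => e1 i), e2, ← Finset.sum_add_distrib]
  apply Finset.sum_congr rfl
  intro i _
  by_cases h : Sum.inl i ∈ S <;> simp [h]

theorem stmt17 (k : ℕ) (f : ℕ → ℝ) (d1 : ℕ) (hd1 : 1 ≤ d1 ∧ d1 ≤ k)
    (hnn : ∀ d, d ≤ k → 0 ≤ f d)
    (hd1min : ∀ d, 1 ≤ d → d ≤ k → f d1 ≤ f d)
    (h0min : ∀ d, 1 ≤ d → d ≤ k → f 0 ≤ f d)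
    (hsecond : ∀ d, 1 ≤ d → d ≤ k → d ≠ d1 → f d + f d1 ≥ 2 * f 0)
    (c : UNetV k → UNetV k → ℝ)
    -- the edges of the network:
    (hcs : ∀ i : Fin k,
      c (usrc k) (Sum.inl i) = if (i : ℕ) + 1 = d1 then f 0 else 0)
    (hct : ∀ i : Fin k, c (Sum.inl i) (usnk k) =
      if (i : ℕ) + 1 = d1 then f d1 else f ((i : ℕ) + 1) - f 0)
    (hzero : ∀ u v : UNetV k,
      (¬∃ i : Fin k, (u = usrc k ∧ v = Sum.inl i) ∨
        (u = Sum.inl i ∧ v = usnk k)) → c u v = 0) :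
    -- the network represents `f`:
    (∀ x : ℕ, x ≤ k → cutCap c (ucutOf k x) = f x) ∧
    -- and the network is `k`-submodular:
    (∀ S : Finset (UNetV k), usrc k ∈ S → usnk k ∉ S →
      cutCap c S ≥ cutCap c (unormCut S)) := by
  obtain ⟨hd1a, hd1b⟩ := hd1
  have hk : 1 ≤ k := le_trans hd1a hd1b
  set i1 : Fin k := ⟨d1 - 1, by omega⟩ with hi1def
  have hi1v : (i1 : ℕ) + 1 = d1 := by simp [hi1def]; omega
  -- representation
  have hrep : ∀ x : ℕ, x ≤ k → cutCap c (ucutOf k x) = f x := by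
    intro x hx
    have hmem : ∀ i : Fin k, (Sum.inl i ∈ ucutOf k x) ↔ (i : ℕ) + 1 = x := by
      intro i; simp [ucutOf, usrc]
    have hsmem : usrc k ∈ ucutOf k x := Finset.mem_insert_self _ _
    have htmem : usnk k ∉ ucutOf k x := by simp [ucutOf, usrc, usnk]
    rw [key_s17 k c hzero _ hsmem htmem]
    rcases Nat.eq_zero_or_pos x with h0 | hpos
    · subst h0
      have e : ∀ i : Fin k, (if Sum.inl i ∈ ucutOf k 0 then c (Sum.inl i) (usnk k)
          else c (usrc k) (Sum.inl i)) = if (i : ℕ) + 1 = d1 then f 0 else 0 := by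
        intro i
        rw [if_neg (by simp [hmem]), hcs]
      rw [Finset.sum_congr rfl (fun i _ => e i)]
      rw [Finset.sum_eq_single_of_mem i1 (Finset.mem_univ i1)
        (fun b _ hb => if_neg (fun h => hb (Fin.ext (by omega))))]
      simp [hi1v]
    · set ix : Fin k := ⟨x - 1, by omega⟩ with hixdef
      have hixv : (ix : ℕ) + 1 = x := by simp [hixdef]; omega
      rw [Fintype.sum_eq_add_sum_compl ix]
      have h2 : ∀ i ∈ ({ix}ᶜ : Finset (Fin k)),
          (if Sum.inl i ∈ ucutOf k x then c (Sum.inl i) (usnk k)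
            else c (usrc k) (Sum.inl i)) = if (i : ℕ) + 1 = d1 then f 0 else 0 := by
        intro i hi
        have hne : i ≠ ix := by simpa using hi
        have hix : ¬ ((i : ℕ) + 1 = x) := fun h => hne (Fin.ext (by omega))
        rw [if_neg (by simp [hmem, hix]), hcs]
      have h1 : (if Sum.inl ix ∈ ucutOf k x then c (Sum.inl ix) (usnk k)
          else c (usrc k) (Sum.inl ix)) = if x = d1 then f d1 else f x - f 0 := by
        rw [if_pos ((hmem ix).2 hixv), hct, hixv]
      rw [Finset.sum_congr rfl h2, h1]
      by_cases hxd : x = d1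
      · have hz : ∀ i ∈ ({ix}ᶜ : Finset (Fin k)),
            (if (i : ℕ) + 1 = d1 then f 0 else 0) = 0 := by
          intro i hi
          have hne : i ≠ ix := by simpa using hi
          rw [if_neg]
          intro h
          exact hne (Fin.ext (by omega))
        rw [Finset.sum_congr rfl hz]
        simp [hxd]
      · have hmemc : i1 ∈ ({ix}ᶜ : Finset (Fin k)) := by
          simp only [Finset.mem_compl, Finset.mem_singleton]
          intro h
          apply hxd
          have : (i1 : ℕ) = (ix : ℕ) := by rw [h]
          omega
        rw [if_neg hxd, Finset.sum_eq_single_of_mem i1 hmemc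
          (fun b _ hb => if_neg (fun h => hb (Fin.ext (by omega)))), if_pos hi1v]
        ring
  refine ⟨hrep, ?_⟩
  -- submodularity
  intro S hsS htS
  rw [key_s17 k c hzero S hsS htS]
  set g : Fin k → ℝ := fun i => if Sum.inl i ∈ S then c (Sum.inl i) (usnk k)
    else c (usrc k) (Sum.inl i) with hgdef
  by_cases htwo : ∃ i j : Fin k, i ≠ j ∧ Sum.inl i ∈ S ∧ Sum.inl j ∈ S
  · obtain ⟨i0, j0, hij, hi0, hj0⟩ := htwo
    have hnorm : unormCut S = {usrc k} := by
      rw [unormCut]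
      have hfil : (S.filter fun w => ∃ i : Fin k, w = Sum.inl i ∧
          ∀ j : Fin k, Sum.inl j ∈ S → j = i) = ∅ := by
        rw [Finset.filter_eq_empty_iff]
        rintro w hw ⟨i, rfl, hall⟩
        exact hij (by rw [hall i0 hi0, hall j0 hj0])
      rw [hfil]
      simp
    have hc0 : ucutOf k 0 = {usrc k} := by
      rw [ucutOf]
      have hfil : (Finset.univ.filter fun w : UNetV k =>
          ∃ i : Fin k, w = Sum.inl i ∧ (i : ℕ) + 1 = 0) = ∅ := by
        rw [Finset.filter_eq_empty_iff]
        rintro w _ ⟨i, rfl, h⟩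
        omega
      rw [hfil]
      simp
    have hval : cutCap c (unormCut S) = f 0 := by
      rw [hnorm, ← hc0, hrep 0 (Nat.zero_le k)]
    rw [hval]
    have hg0 : ∀ i : Fin k, 0 ≤ g i := by
      intro i
      simp only [hgdef]
      by_cases h : Sum.inl i ∈ S
      · rw [if_pos h, hct]
        by_cases h2 : (i : ℕ) + 1 = d1
        · rw [if_pos h2]; exact hnn d1 hd1b
        · rw [if_neg h2]
          have := h0min ((i : ℕ) + 1) (by omega) (by have := i.isLt; omega)
          linarith
      · rw [if_neg h, hcs]
        by_cases h2 : (i : ℕ) + 1 = d1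
        · rw [if_pos h2]; exact hnn 0 (Nat.zero_le k)
        · rw [if_neg h2]
    by_cases hi1S : Sum.inl i1 ∈ S
    · have hex : ∃ j : Fin k, j ≠ i1 ∧ Sum.inl j ∈ S := by
        by_cases h : i0 = i1
        · exact ⟨j0, by rw [← h]; exact Ne.symm hij, hj0⟩
        · exact ⟨i0, h, hi0⟩
      obtain ⟨j, hjne, hjS⟩ := hex
      have hsum := Finset.sum_le_sum_of_subset_of_nonneg
        (Finset.subset_univ ({i1, j} : Finset (Fin k))) (fun i _ _ => hg0 i)
      rw [Finset.sum_pair (Ne.symm hjne)] at hsum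
      have gi1 : g i1 = f d1 := by
        simp only [hgdef]
        rw [if_pos hi1S, hct, if_pos hi1v]
      have hj1 : (j : ℕ) + 1 ≠ d1 := fun h => hjne (Fin.ext (by omega))
      have gj : g j = f ((j : ℕ) + 1) - f 0 := by
        simp only [hgdef]
        rw [if_pos hjS, hct, if_neg hj1]
      have hs2 := hsecond ((j : ℕ) + 1) (by omega) (by have := j.isLt; omega) hj1
      rw [gi1, gj] at hsum
      linarith
    · have hsum := Finset.single_le_sum (f := g) (fun i _ => hg0 i) (Finset.mem_univ i1)
      have gi1 : g i1 = f 0 := by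
        simp only [hgdef]
        rw [if_neg hi1S, hcs, if_pos hi1v]
      linarith
  · have heq : unormCut S = S := by
      apply Finset.Subset.antisymm
      · rw [unormCut]
        exact Finset.insert_subset hsS (Finset.filter_subset _ _)
      · intro w hw
        rw [unormCut, Finset.mem_insert]
        obtain (i | b) := w
        · right
          rw [Finset.mem_filter]
          refine ⟨hw, i, rfl, fun j hj => ?_⟩
          by_contra hne
          exact htwo ⟨j, i, hne, hj, hw⟩
        · cases b
          · exact Or.inl rfl
          · exact absurd hw htS
    rw [heq, key_s17 k c hzero S hsS htS]
end

section
/- Let (G,c) be a k-submodular (X,k)-network representing f : {0,...,k}^X → ℝ. Then an assignment φ is an extreme minimum solution of f if and only if the corresponding cut S_φ is an extreme normalised minimum cut. Here φ is dominated by a minimizer ψ if φ ≠ ψ and φ(v) ≠ 0 implies φ(v) = ψ(v); extreme means dominated by no minimizer. A normalised minimum cut S is dominated by a normalised minimum cut S' if S ⊊ S'; extreme means dominated by none. -/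
/-- The vertex set of an `(X,k)`-network. -/
abbrev NetV (X : Type*) (k : ℕ) := (X × Fin k) ⊕ Bool

/-- The source vertex `s`. -/
def srcV (X : Type*) (k : ℕ) : NetV X k := Sum.inr false

/-- The sink vertex `t`. -/
def snkV (X : Type*) (k : ℕ) : NetV X k := Sum.inr true

/-- The cut `S_φ = {s} ∪ {v_{φ(v)} : φ(v) ≠ 0}` corresponding to an
assignment `φ : X → {0,...,k}`. -/
def cutOf {X : Type*} [Fintype X] [DecidableEq X] (k : ℕ) (φ : X → ℕ) :
    Finset (NetV X k) :=
  insert (srcV X k) (Finset.univ.filter fun w =>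
    ∃ (v : X) (i : Fin k), w = Sum.inl (v, i) ∧ φ v = (i : ℕ) + 1)

/-- The normalisation `ν(S)`. -/
def normCut {X : Type*} [Fintype X] [DecidableEq X] {k : ℕ}
    (S : Finset (NetV X k)) : Finset (NetV X k) :=
  insert (srcV X k) (S.filter fun w =>
    ∃ (v : X) (i : Fin k), w = Sum.inl (v, i) ∧
      ∀ j : Fin k, Sum.inl (v, j) ∈ S → j = i)

/-- `S` is a normalised minimum `s`-`t` cut. -/
def IsNormMinCut {X : Type*} [Fintype X] [DecidableEq X] {k : ℕ}
    (c : NetV X k → NetV X k → ℝ) (S : Finset (NetV X k)) : Prop :=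
  srcV X k ∈ S ∧ snkV X k ∉ S ∧
  (∀ (v : X) (i j : Fin k), Sum.inl (v, i) ∈ S → Sum.inl (v, j) ∈ S → i = j) ∧
  ∀ S' : Finset (NetV X k), srcV X k ∈ S' → snkV X k ∉ S' →
    cutCap c S ≤ cutCap c S'


/-!
Every normalised cut `S` (containing `s`, not `t`, and at most one `v_i` for each `v`) is the
cut `S_φ` of a unique assignment `φ`, and `S_φ ⊆ S_ψ` says exactly that `ψ` extends the nonzero
values of `φ`. Since `ν(S)` is normalised and, by `k`-submodularity, no more expensive than `S`,
a minimum normalised cut is a minimum cut; so minimisers of `f` correspond to normalised minimum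
cuts, and domination of assignments to strict inclusion of cuts.
-/

section Cuts

variable {X : Type*} [Fintype X] [DecidableEq X] {k : ℕ}

lemma srcV_mem_cutOf (φ : X → ℕ) : srcV X k ∈ cutOf k φ := Finset.mem_insert_self _ _

lemma snkV_notMem_cutOf (φ : X → ℕ) : snkV X k ∉ cutOf k φ := by
  simp [cutOf, snkV, srcV]

lemma inl_mem_cutOf {φ : X → ℕ} {v : X} {i : Fin k} :
    Sum.inl (v, i) ∈ cutOf k φ ↔ φ v = (i : ℕ) + 1 := by
  simp [cutOf, srcV]

lemma cutOf_normal {φ : X → ℕ} {v : X} {i j : Fin k}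
    (hi : Sum.inl (v, i) ∈ cutOf k φ) (hj : Sum.inl (v, j) ∈ cutOf k φ) : i = j := by
  rw [inl_mem_cutOf] at hi hj
  exact Fin.ext (by omega)

lemma cutOf_subset_cutOf_iff {φ ψ : X → ℕ} (hφ : ∀ v, φ v ≤ k) :
    cutOf k φ ⊆ cutOf k ψ ↔ ∀ v, φ v ≠ 0 → φ v = ψ v := by
  constructor
  · intro hsub v hv
    have hmem : Sum.inl (v, (⟨φ v - 1, by have := hφ v; omega⟩ : Fin k)) ∈ cutOf k φ :=
      inl_mem_cutOf.mpr (by simp only; omega)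
    have := inl_mem_cutOf.mp (hsub hmem)
    simp only at this
    omega
  · rintro hdom (⟨v, i⟩ | (_ | _)) hw
    · rw [inl_mem_cutOf] at hw ⊢
      rwa [← hdom v (by omega)]
    · exact srcV_mem_cutOf ψ
    · exact absurd hw (snkV_notMem_cutOf φ)

lemma eq_of_cutOf_eq {φ ψ : X → ℕ} (hφ : ∀ v, φ v ≤ k) (hψ : ∀ v, ψ v ≤ k)
    (h : cutOf k φ = cutOf k ψ) : φ = ψ := by
  have hφψ := (cutOf_subset_cutOf_iff hφ).mp h.subset
  have hψφ := (cutOf_subset_cutOf_iff hψ).mp h.symm.subset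
  funext v
  by_cases h0 : φ v = 0
  · by_contra hne
    exact hne (hψφ v (by omega)).symm
  · exact hφψ v h0

lemma exists_cutOf_eq {S : Finset (NetV X k)} (hs : srcV X k ∈ S) (ht : snkV X k ∉ S)
    (hn : ∀ (v : X) (i j : Fin k), Sum.inl (v, i) ∈ S → Sum.inl (v, j) ∈ S → i = j) :
    ∃ φ : X → ℕ, (∀ v, φ v ≤ k) ∧ cutOf k φ = S := by
  let φ : X → ℕ := fun v =>
    if h : ∃ i : Fin k, Sum.inl (v, i) ∈ S then (h.choose : ℕ) + 1 else 0
  refine ⟨φ, fun v => ?_, ?_⟩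
  · simp only [φ]
    split
    · next h => exact h.choose.isLt
    · omega
  ext w
  rcases w with ⟨v, i⟩ | (_ | _)
  · rw [inl_mem_cutOf]
    simp only [φ]
    constructor
    · intro h
      split at h
      · next hex =>
        have hi : hex.choose = i := Fin.ext (by omega)
        exact hi ▸ hex.choose_spec
      · omega
    · intro h
      have hex : ∃ j : Fin k, Sum.inl (v, j) ∈ S := ⟨i, h⟩
      rw [dif_pos hex, hn v _ _ hex.choose_spec h]
  · exact iff_of_true (srcV_mem_cutOf φ) hs
  · exact iff_of_false (snkV_notMem_cutOf φ) ht

lemma srcV_mem_normCut (S : Finset (NetV X k)) : srcV X k ∈ normCut S :=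
  Finset.mem_insert_self _ _

lemma snkV_notMem_normCut (S : Finset (NetV X k)) : snkV X k ∉ normCut S := by
  simp [normCut, snkV, srcV]

lemma normCut_normal {S : Finset (NetV X k)} {v : X} {i j : Fin k}
    (hi : Sum.inl (v, i) ∈ normCut S) (hj : Sum.inl (v, j) ∈ normCut S) : i = j := by
  simp only [normCut, srcV, Finset.mem_insert, reduceCtorEq, false_or, Finset.mem_filter,
    Sum.inl.injEq, Prod.mk.injEq] at hi hj
  obtain ⟨-, v', i', ⟨rfl, rfl⟩, hi⟩ := hi
  exact (hi j hj.1).symm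

end Cuts

section Network

variable {X : Type*} [Fintype X] [DecidableEq X] {k : ℕ}
  {c : NetV X k → NetV X k → ℝ} {f : (X → ℕ) → ℝ}

lemma isMinimizer_iff_isNormMinCut_cutOf
    (hrep : ∀ φ : X → ℕ, (∀ v, φ v ≤ k) → cutCap c (cutOf k φ) = f φ)
    (hksub : ∀ S : Finset (NetV X k), srcV X k ∈ S → snkV X k ∉ S →
      cutCap c (normCut S) ≤ cutCap c S)
    {ψ : X → ℕ} (hψ : ∀ v, ψ v ≤ k) :
    (∀ χ : X → ℕ, (∀ v, χ v ≤ k) → f ψ ≤ f χ) ↔ IsNormMinCut c (cutOf k ψ) := by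
  constructor
  · intro hmin
    refine ⟨srcV_mem_cutOf ψ, snkV_notMem_cutOf ψ, fun v i j => cutOf_normal, fun S hs ht => ?_⟩
    obtain ⟨χ, hχ, hχS⟩ := exists_cutOf_eq (srcV_mem_normCut S) (snkV_notMem_normCut S)
      (fun v i j => normCut_normal)
    calc cutCap c (cutOf k ψ) = f ψ := hrep ψ hψ
      _ ≤ f χ := hmin χ hχ
      _ = cutCap c (normCut S) := by rw [← hrep χ hχ, hχS]
      _ ≤ cutCap c S := hksub S hs ht
  · intro hS χ hχ
    calc f ψ = cutCap c (cutOf k ψ) := (hrep ψ hψ).symm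
      _ ≤ cutCap c (cutOf k χ) := hS.2.2.2 _ (srcV_mem_cutOf χ) (snkV_notMem_cutOf χ)
      _ = f χ := hrep χ hχ

lemma exists_dominating_minimizer_iff
    (hrep : ∀ φ : X → ℕ, (∀ v, φ v ≤ k) → cutCap c (cutOf k φ) = f φ)
    (hksub : ∀ S : Finset (NetV X k), srcV X k ∈ S → snkV X k ∉ S →
      cutCap c (normCut S) ≤ cutCap c S)
    {φ : X → ℕ} (hφ : ∀ v, φ v ≤ k) :
    (∃ ψ : X → ℕ, (∀ v, ψ v ≤ k) ∧ (∀ χ : X → ℕ, (∀ v, χ v ≤ k) → f ψ ≤ f χ) ∧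
        ψ ≠ φ ∧ (∀ v, φ v ≠ 0 → φ v = ψ v)) ↔
      ∃ S' : Finset (NetV X k), IsNormMinCut c S' ∧ cutOf k φ ⊂ S' := by
  constructor
  · rintro ⟨ψ, hψ, hψmin, hne, hdom⟩
    refine ⟨cutOf k ψ, (isMinimizer_iff_isNormMinCut_cutOf hrep hksub hψ).mp hψmin,
      (cutOf_subset_cutOf_iff hφ).mpr hdom, fun hsup => hne ?_⟩
    exact eq_of_cutOf_eq hψ hφ (hsup.antisymm ((cutOf_subset_cutOf_iff hφ).mpr hdom))
  · rintro ⟨S', hS', hsub⟩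
    obtain ⟨ψ, hψ, rfl⟩ := exists_cutOf_eq hS'.1 hS'.2.1 hS'.2.2.1
    exact ⟨ψ, hψ, (isMinimizer_iff_isNormMinCut_cutOf hrep hksub hψ).mpr hS',
      fun h => hsub.ne (h ▸ rfl), (cutOf_subset_cutOf_iff hφ).mp hsub.subset⟩

end Network

theorem stmt18_general {X : Type*} [Fintype X] [DecidableEq X] (k : ℕ)
    (c : NetV X k → NetV X k → ℝ)
    (f : (X → ℕ) → ℝ)
    -- the network represents `f`:
    (hrep : ∀ φ : X → ℕ, (∀ v, φ v ≤ k) → cutCap c (cutOf k φ) = f φ)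
    -- the network is `k`-submodular:
    (hksub : ∀ S : Finset (NetV X k), srcV X k ∈ S → snkV X k ∉ S →
      cutCap c (normCut S) ≤ cutCap c S)
    (φ : X → ℕ) (hφ : ∀ v, φ v ≤ k) :
    -- `φ` is an extreme minimum solution of `f` iff `S_φ` is an extreme
    -- normalised minimum cut.
    ((∀ ψ : X → ℕ, (∀ v, ψ v ≤ k) → f φ ≤ f ψ) ∧
      ¬∃ ψ : X → ℕ, (∀ v, ψ v ≤ k) ∧
        (∀ χ : X → ℕ, (∀ v, χ v ≤ k) → f ψ ≤ f χ) ∧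
        ψ ≠ φ ∧ (∀ v, φ v ≠ 0 → φ v = ψ v)) ↔
    (IsNormMinCut c (cutOf k φ) ∧
      ¬∃ S' : Finset (NetV X k), IsNormMinCut c S' ∧ cutOf k φ ⊂ S') := by
  rw [isMinimizer_iff_isNormMinCut_cutOf hrep hksub hφ,
    exists_dominating_minimizer_iff hrep hksub hφ]

theorem stmt18 {X : Type*} [Fintype X] [DecidableEq X] (k : ℕ)
    (c : NetV X k → NetV X k → ℝ) (hc : ∀ u v, 0 ≤ c u v)
    (f : (X → ℕ) → ℝ)
    -- the network represents `f`:
    (hrep : ∀ φ : X → ℕ, (∀ v, φ v ≤ k) → cutCap c (cutOf k φ) = f φ)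
    -- the network is `k`-submodular:
    (hksub : ∀ S : Finset (NetV X k), srcV X k ∈ S → snkV X k ∉ S →
      cutCap c (normCut S) ≤ cutCap c S)
    (φ : X → ℕ) (hφ : ∀ v, φ v ≤ k) :
    -- `φ` is an extreme minimum solution of `f` iff `S_φ` is an extreme
    -- normalised minimum cut.
    ((∀ ψ : X → ℕ, (∀ v, ψ v ≤ k) → f φ ≤ f ψ) ∧
      ¬∃ ψ : X → ℕ, (∀ v, ψ v ≤ k) ∧
        (∀ χ : X → ℕ, (∀ v, χ v ≤ k) → f ψ ≤ f χ) ∧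
        ψ ≠ φ ∧ (∀ v, φ v ≠ 0 → φ v = ψ v)) ↔
    (IsNormMinCut c (cutOf k φ) ∧
      ¬∃ S' : Finset (NetV X k), IsNormMinCut c S' ∧ cutOf k φ ⊂ S') :=
  stmt18_general k c f hrep hksub φ hφ
end
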